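/- arXiv:2202.12380 — 2 statements merged into one kernel-verified Lean document; each statement's English description precedes it below -/
import Mathlib

section
/- Under these hypotheses the single approximate matching pursuit step contracts the residual energy by a definite factor: ‖r − c·d‖₂² ≤ (1 − ϵ'·|c|²/‖r‖₂²)·‖r‖₂². -/
/-!
Expanding the square, `‖r - c • d‖² = ‖r‖² - 2 Re (c̄ ⟨r, d⟩) + |c|²` because `‖d‖ = 1`.
Since `⟨r, d⟩` lies within `δ |c|` of `c`, `Re (c̄ ⟨r, d⟩) ≥ (1 - δ) |c|²`, so the residual
energy drops by at least `(1 - 2δ) |c|² ≥ ϵ' |c|²`.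
-/

open scoped BigOperators
open ComplexConjugate

/-- The inner product `⟨u,v⟩ = ∑ l, u l * conj (v l)`. -/
noncomputable def cip {L : ℕ} (u v : Fin L → ℂ) : ℂ := ∑ l, u l * conj (v l)

/-- The Euclidean norm `‖u‖₂ = √(∑ l, |u l|²)`. -/
noncomputable def nrm {L : ℕ} (u : Fin L → ℂ) : ℝ := Real.sqrt (∑ l, ‖u l‖ ^ 2)

open scoped InnerProductSpace

theorem norm_sub_smul_sq_eq {E : Type*} [NormedAddCommGroup E] [InnerProductSpace ℂ E]
    (x y : E) (c : ℂ) :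
    ‖x - c • y‖ ^ 2 = ‖x‖ ^ 2 - 2 * (conj c * ⟪y, x⟫_ℂ).re + ‖c‖ ^ 2 * ‖y‖ ^ 2 := by
  rw [@norm_sub_sq ℂ, inner_smul_right, norm_smul, mul_pow, ← inner_conj_symm]
  simp only [RCLike.re_to_complex, Complex.mul_re, Complex.conj_re, Complex.conj_im]
  ring

theorem nrm_eq_norm {L : ℕ} (u : Fin L → ℂ) : nrm u = ‖WithLp.toLp 2 u‖ := by
  rw [nrm, EuclideanSpace.norm_eq]

-- Mathlib's inner product is conjugate-linear in its first argument, hence the swap.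
theorem cip_eq_inner {L : ℕ} (u v : Fin L → ℂ) :
    cip u v = ⟪WithLp.toLp 2 v, WithLp.toLp 2 u⟫_ℂ := by
  simp [cip, PiLp.inner_apply]

theorem nrm_sub_smul_sq {L : ℕ} (r d : Fin L → ℂ) (c : ℂ) (hd : nrm d = 1) :
    nrm (r - c • d) ^ 2 = nrm r ^ 2 - 2 * (conj c * cip r d).re + ‖c‖ ^ 2 := by
  rw [nrm_eq_norm] at hd ⊢
  rw [nrm_eq_norm, cip_eq_inner, WithLp.toLp_sub, WithLp.toLp_smul, norm_sub_smul_sq_eq, hd,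
    one_pow, mul_one]

theorem nrm_pos {L : ℕ} {u : Fin L → ℂ} (hu : u ≠ 0) : 0 < nrm u := by
  rw [nrm_eq_norm, norm_pos_iff]
  simpa using hu

theorem le_re_conj_mul_of_norm_sub_le {z c : ℂ} {η δ : ℝ} (hz : ‖z - c‖ ≤ η) (hη : η ≤ δ * ‖c‖) :
    (1 - δ) * ‖c‖ ^ 2 ≤ (conj c * z).re := by
  have herr : ‖conj c * (z - c)‖ ≤ δ * ‖c‖ ^ 2 := by
    rw [norm_mul, Complex.norm_conj, sq, mul_left_comm]
    exact mul_le_mul_of_nonneg_left (hz.trans hη) (norm_nonneg c)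
  have hsplit : conj c * z = ‖c‖ ^ 2 + conj c * (z - c) := by
    rw [mul_sub, ← Complex.normSq_eq_conj_mul_self, Complex.normSq_eq_norm_sq]; push_cast; ring
  have hre_err := (Complex.abs_re_le_norm (conj c * (z - c))).trans herr
  rw [hsplit, Complex.add_re]
  norm_cast
  linarith [neg_abs_le (conj c * (z - c)).re]

theorem approx_mp_step_contraction_general
    {L : ℕ} (r d : Fin L → ℂ) (hr : r ≠ 0) (hd : nrm d = 1)
    (c : ℂ) (η δ ϵ' : ℝ)
    (hϵ' : ϵ' < 1 - 2 * δ)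
    (hc : ‖cip r d - c‖ ≤ η)
    (hηc : η ≤ δ * ‖c‖) :
    nrm (r - c • d) ^ 2 ≤ (1 - ϵ' * ‖c‖ ^ 2 / nrm r ^ 2) * nrm r ^ 2 := by
  have hr2 : nrm r ^ 2 ≠ 0 := (pow_pos (nrm_pos hr) 2).ne'
  rw [sub_mul, one_mul, div_mul_cancel₀ _ hr2, nrm_sub_smul_sq r d c hd]
  have hre := le_re_conj_mul_of_norm_sub_le hc hηc
  have hϵ'c : ϵ' * ‖c‖ ^ 2 ≤ (1 - 2 * δ) * ‖c‖ ^ 2 :=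
    mul_le_mul_of_nonneg_right hϵ'.le (sq_nonneg _)
  linarith

/-- under the stated hypotheses, a single approximate matching pursuit
step contracts the residual energy by a definite factor:
`‖r − c·d‖₂² ≤ (1 − ϵ'·|c|²/‖r‖₂²)·‖r‖₂²`. -/
theorem approx_mp_step_contraction
    {L : ℕ} (hL : 0 < L) (r d : Fin L → ℂ) (hr : r ≠ 0) (hd : nrm d = 1)
    (c : ℂ) (η δ ϵ' : ℝ) (hη : 0 ≤ η)
    (hδ0 : 0 < δ) (hδ : δ < 1 / 2)
    (hϵ'0 : 0 < ϵ') (hϵ' : ϵ' < 1 - 2 * δ)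
    (hc : ‖cip r d - c‖ ≤ η)
    (hηc : η ≤ δ * ‖c‖)
    (hclarge : 2 * δ / (1 - (2 * δ + ϵ')) * nrm r ≤ ‖c‖) :
    nrm (r - c • d) ^ 2 ≤ (1 - ϵ' * ‖c‖ ^ 2 / nrm r ^ 2) * nrm r ^ 2 :=
  approx_mp_step_contraction_general r d hr hd c η δ ϵ' hϵ' hc hηc
end

section
/- If ε·Σ_k ≤ δ·|ĉ_k(p_{k+1})| for some δ > 0, then the magnitude of the selected coefficient dominates all true analysis coefficients of the residual up to the factor (1+δ): max_p |⟨r_k, d_p⟩| ≤ (1+δ)·|ĉ_k(p_{k+1})|. -/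
open scoped BigOperators
open ComplexConjugate

/-! Let `f_k(i) = ⟨r_k, d_i⟩ - ĉ_k(i)` be the error of the approximate coefficients. It starts at
`0`, and one step changes it by `ĉ_k(p_{k+1}) · (G - G_ε)(i, p_{k+1})`, whose modulus is at most
`ε · |ĉ_k(p_{k+1})|` because hard thresholding at `ε` moves no entry by more than `ε`.
Telescoping gives `|f_k(i)| ≤ ε Σ_k ≤ δ |ĉ_k(p_{k+1})|`, and `|ĉ_k(i)| ≤ |ĉ_k(p_{k+1})|` by the
greedy choice. -/

lemma cip_sub {L : ℕ} (u v w : Fin L → ℂ) : cip (u - v) w = cip u w - cip v w := by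
  simp only [cip, Pi.sub_apply, sub_mul, Finset.sum_sub_distrib]

lemma cip_mulVec_single {L P : ℕ} (D : Matrix (Fin L) (Fin P) ℂ) (j : Fin P) (a : ℂ)
    (v : Fin L → ℂ) : cip (D.mulVec (Pi.single j a)) v = a * cip (fun l => D l j) v := by
  simp only [cip, Matrix.mulVec_single, Pi.smul_apply, op_smul_eq_mul, Matrix.col_apply,
    Finset.mul_sum]
  exact Finset.sum_congr rfl fun _ _ => by ring

lemma norm_sub_ite_lt_norm_le {E : Type*} [SeminormedAddGroup E] {ε : ℝ} (hε : 0 ≤ ε) (z : E) :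
    ‖z - if ε < ‖z‖ then z else 0‖ ≤ ε := by
  split_ifs with h
  · simpa using hε
  · simpa using not_lt.mp h

theorem approx_cdmp_selected_coefficient_dominates_general
    {L P : ℕ}
    (x : Fin L → ℂ) (D : Matrix (Fin L) (Fin P) ℂ)
    (ε δ : ℝ) (hε : 0 < ε)
    (G Gε : Matrix (Fin P) (Fin P) ℂ)
    (hG : ∀ i j, G i j = cip (fun l => D l j) (fun l => D l i))
    (hGε : ∀ i j, Gε i j = if ε < ‖G i j‖ then G i j else 0)
    (c chat : ℕ → Fin P → ℂ) (p : ℕ → Fin P)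
    (hc0 : c 0 = 0)
    (hchat0 : ∀ i, chat 0 i = cip x (fun l => D l i))
    (hp : ∀ k i, ‖chat k i‖ ≤ ‖chat k (p (k + 1))‖)
    (hchatrec : ∀ k, chat (k + 1) = fun i => chat k i - chat k (p (k + 1)) * Gε i (p (k + 1)))
    (hcrec : ∀ k, c (k + 1) = c k + Pi.single (p (k + 1)) (chat k (p (k + 1))))
    (r : ℕ → Fin L → ℂ) (hr : ∀ k, r k = x - D.mulVec (c k))
    (S : ℕ → ℝ)
    (hS : ∀ k, S k = ∑ l ∈ Finset.range k, ‖chat l (p (l + 1))‖)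
    (k : ℕ)
    (hεS : ε * S k ≤ δ * ‖chat k (p (k + 1))‖) :
    ∀ i, ‖cip (r k) (fun l => D l i)‖ ≤ (1 + δ) * ‖chat k (p (k + 1))‖ := by
  set err : ℕ → Fin P → ℂ := fun n i => cip (r n) (fun l => D l i) - chat n i
  have err_zero : ∀ i, err 0 i = 0 := fun i => by simp [err, hr, hc0, hchat0]
  have r_succ : ∀ n, r (n + 1) = r n - D.mulVec (Pi.single (p (n + 1)) (chat n (p (n + 1)))) :=
    fun n => by rw [hr, hr, hcrec, Matrix.mulVec_add, sub_add_eq_sub_sub]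
  have err_succ : ∀ n i, err (n + 1) i
      = err n i - chat n (p (n + 1)) * (G i (p (n + 1)) - Gε i (p (n + 1))) := fun n i => by
    simp only [err, r_succ, cip_sub, cip_mulVec_single, hchatrec, hG]
    ring
  have err_dist : ∀ n i, dist (err n i) (err (n + 1) i) ≤ ε * ‖chat n (p (n + 1))‖ :=
    fun n i => by
      rw [dist_eq_norm, err_succ, sub_sub_cancel, norm_mul, mul_comm, hGε]
      gcongr
      exact norm_sub_ite_lt_norm_le hε.le _
  intro i
  have err_le : ‖err k i‖ ≤ ε * S k := by
    simpa [err_zero, hS, Finset.mul_sum] using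
      dist_le_range_sum_of_dist_le (f := fun n => err n i) k fun _ => err_dist _ i
  calc ‖cip (r k) (fun l => D l i)‖ ≤ ‖err k i‖ + ‖chat k i‖ := norm_le_norm_sub_add _ _
    _ ≤ δ * ‖chat k (p (k + 1))‖ + ‖chat k (p (k + 1))‖ := add_le_add (err_le.trans hεS) (hp k i)
    _ = (1 + δ) * ‖chat k (p (k + 1))‖ := by ring

/-- if `ε·Σ_k ≤ δ·|ĉ_k(p_{k+1})|` for some `δ > 0`, then the magnitude of
the selected coefficient dominates all true analysis coefficients of the residual up to the
factor `(1+δ)`: `max_p |⟨r_k, d_p⟩| ≤ (1+δ)·|ĉ_k(p_{k+1})|`. -/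
theorem approx_cdmp_selected_coefficient_dominates
    {L P : ℕ} (hL : 0 < L) (hP : 0 < P)
    (x : Fin L → ℂ) (D : Matrix (Fin L) (Fin P) ℂ)
    (hDnorm : ∀ q, nrm (fun l => D l q) = 1)
    (ε δ : ℝ) (hε : 0 < ε) (hδ : 0 < δ)
    (G Gε : Matrix (Fin P) (Fin P) ℂ)
    (hG : ∀ i j, G i j = cip (fun l => D l j) (fun l => D l i))
    (hGε : ∀ i j, Gε i j = if ε < ‖G i j‖ then G i j else 0)
    (c chat : ℕ → Fin P → ℂ) (p : ℕ → Fin P)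
    (hc0 : c 0 = 0)
    (hchat0 : ∀ i, chat 0 i = cip x (fun l => D l i))
    (hp : ∀ k i, ‖chat k i‖ ≤ ‖chat k (p (k + 1))‖)
    (hchatrec : ∀ k, chat (k + 1) = fun i => chat k i - chat k (p (k + 1)) * Gε i (p (k + 1)))
    (hcrec : ∀ k, c (k + 1) = c k + Pi.single (p (k + 1)) (chat k (p (k + 1))))
    (r : ℕ → Fin L → ℂ) (hr : ∀ k, r k = x - D.mulVec (c k))
    (S : ℕ → ℝ)
    (hS : ∀ k, S k = ∑ l ∈ Finset.range k, ‖chat l (p (l + 1))‖)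
    (k : ℕ)
    (hεS : ε * S k ≤ δ * ‖chat k (p (k + 1))‖) :
    ∀ i, ‖cip (r k) (fun l => D l i)‖ ≤ (1 + δ) * ‖chat k (p (k + 1))‖ :=
  approx_cdmp_selected_coefficient_dominates_general x D ε δ hε G Gε hG hGε c chat p hc0 hchat0 hp
    hchatrec hcrec r hr S hS k hεS
end
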